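/- arXiv:2112.03347 — 2 statements merged into one kernel-verified Lean document; each statement's English description precedes it below -/
import Mathlib

section
/- Let α : ℝ → ℝ be an extended class K∞ function (continuous, strictly increasing, with α(0) = 0), let T ≥ 0, and let ζ : ℝ → ℝ be differentiable. If ζ'(t) ≥ -α(ζ(t)) for all t ∈ [0, T] and ζ(0) ≥ 0, then ζ(t) ≥ 0 for all t ∈ [0, T]. -/
/-! Wherever `ζ < 0` we have `ζ' ≥ -α ζ > 0`. If `ζ` were negative at some time, then after
the last earlier time `s` with `ζ s ≥ 0` it would be strictly increasing, so `ζ s` would be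
negative too. -/

open Set

theorem exists_last_nonneg_of_continuousOn {f : ℝ → ℝ} {a x : ℝ}
    (hf : ContinuousOn f (Icc a x)) (hax : a ≤ x) (ha : 0 ≤ f a) :
    ∃ s ∈ Icc a x, 0 ≤ f s ∧ ∀ t ∈ Ioc s x, f t < 0 := by
  have hclosed : IsClosed {t ∈ Icc a x | 0 ≤ f t} :=
    hf.preimage_isClosed_of_isClosed isClosed_Icc isClosed_Ici
  obtain ⟨s, ⟨hs, hfs⟩, hmax⟩ :=
    (isCompact_Icc.of_isClosed_subset hclosed (sep_subset _ _)).exists_isGreatest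
      ⟨a, left_mem_Icc.2 hax, ha⟩
  refine ⟨s, hs, hfs, fun t ht => ?_⟩
  by_contra! hft
  exact (hmax ⟨⟨hs.1.trans ht.1.le, ht.2⟩, hft⟩).not_gt ht.1

theorem nonneg_of_deriv_pos_of_neg {f : ℝ → ℝ} {a b : ℝ}
    (hf : ContinuousOn f (Icc a b)) (ha : 0 ≤ f a)
    (hderiv : ∀ x ∈ Ioo a b, f x < 0 → 0 < deriv f x) :
    ∀ x ∈ Icc a b, 0 ≤ f x := by
  intro x hx
  by_contra! hfx
  obtain ⟨s, hs, hfs, hneg⟩ :=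
    exists_last_nonneg_of_continuousOn (hf.mono (Icc_subset_Icc_right hx.2)) hx.1 ha
  have hsx : s < x := hs.2.lt_of_ne (by rintro rfl; linarith)
  have hmono : StrictMonoOn f (Icc s x) := by
    refine strictMonoOn_of_deriv_pos (convex_Icc s x)
      (hf.mono (Icc_subset_Icc hs.1 hx.2)) fun t ht => ?_
    rw [interior_Icc] at ht
    exact hderiv t ⟨hs.1.trans_lt ht.1, ht.2.trans_le hx.2⟩ (hneg t ⟨ht.1, ht.2.le⟩)
  linarith [hmono (left_mem_Icc.2 hsx.le) (right_mem_Icc.2 hsx.le) hsx]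

theorem cbf_scalar_safety_general
    (α : ℝ → ℝ) (hαmono : StrictMono α) (hα0 : α 0 = 0)
    (T : ℝ) (ζ : ℝ → ℝ) (hζ : Differentiable ℝ ζ)
    (hineq : ∀ t ∈ Set.Icc (0 : ℝ) T, deriv ζ t ≥ -α (ζ t))
    (h0 : ζ 0 ≥ 0) :
    ∀ t ∈ Set.Icc (0 : ℝ) T, ζ t ≥ 0 := by
  refine nonneg_of_deriv_pos_of_neg hζ.continuous.continuousOn h0 fun t ht hζt => ?_
  have hα : α (ζ t) < 0 := hα0 ▸ hαmono hζt
  linarith [hineq t (Ioo_subset_Icc_self ht)]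

/-- CBF trajectory safety: if `α` is an extended class K∞ function (continuous, strictly
increasing, `α 0 = 0`) and the differentiable scalar `ζ` satisfies `ζ' t ≥ -α (ζ t)` on
`[0, T]` with `ζ 0 ≥ 0`, then `ζ t ≥ 0` on `[0, T]`. -/
theorem cbf_scalar_safety
    (α : ℝ → ℝ) (hαc : Continuous α) (hαmono : StrictMono α) (hα0 : α 0 = 0)
    (T : ℝ) (hT : 0 ≤ T) (ζ : ℝ → ℝ) (hζ : Differentiable ℝ ζ)
    (hineq : ∀ t ∈ Set.Icc (0 : ℝ) T, deriv ζ t ≥ -α (ζ t))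
    (h0 : ζ 0 ≥ 0) :
    ∀ t ∈ Set.Icc (0 : ℝ) T, ζ t ≥ 0 :=
  cbf_scalar_safety_general α hαmono hα0 T ζ hζ hineq h0
end

section
/- Let r ∈ ℕ with r ≥ 1, let T ≥ 0, let p₁, ..., p_r be real numbers, and let ν₀ : ℝ → ℝ be r-times differentiable. Define recursively ν_i(t) = ν_{i-1}'(t) - p_i·ν_{i-1}(t) for i = 1, ..., r. If ν_i(0) ≥ 0 for every i ∈ {0, ..., r-1}, and ν_r(t) ≥ 0 for all t ∈ [0, T], then ν_i(t) ≥ 0 for all i ∈ {0, ..., r-1} and all t ∈ [0, T]; in particular ν₀(t) ≥ 0 for all t ∈ [0, T]. -/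
/-! Each step is a scalar comparison: `ν' - p ν ≥ 0` says that `ν(t) e^{-p t}` is nondecreasing,
so `ν` stays nonnegative once it starts nonnegative. Descending from `ν_r ≥ 0` through
`ν_{i+1} = ν_i' - p_{i+1} ν_i` gives `ν_i ≥ 0` for every `i`. -/

open Set Real

theorem hasDerivAt_mul_exp_neg_mul {f : ℝ → ℝ} {f' p t : ℝ} (hf : HasDerivAt f f' t) :
    HasDerivAt (fun s => f s * exp (-p * s)) ((f' - p * f t) * exp (-p * t)) t := by
  have hexp : HasDerivAt (fun s => exp (-p * s)) (exp (-p * t) * -p) t := by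
    simpa using ((hasDerivAt_id t).const_mul (-p)).exp
  exact (hf.mul hexp).congr_deriv (by ring)

theorem nonneg_of_deriv_sub_mul_nonneg {f : ℝ → ℝ} {p a b : ℝ} (hf : Differentiable ℝ f)
    (ha : 0 ≤ f a) (hd : ∀ t ∈ Icc a b, 0 ≤ deriv f t - p * f t) :
    ∀ t ∈ Icc a b, 0 ≤ f t := by
  set g : ℝ → ℝ := fun s => f s * exp (-p * s)
  have hg : ∀ t, HasDerivAt g ((deriv f t - p * f t) * exp (-p * t)) t := fun t =>
    hasDerivAt_mul_exp_neg_mul (hf t).hasDerivAt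
  have hg_mono : MonotoneOn g (Icc a b) := by
    refine monotoneOn_of_deriv_nonneg (convex_Icc a b)
      (fun t _ => (hg t).continuousAt.continuousWithinAt)
      (fun t _ => (hg t).differentiableAt.differentiableWithinAt) fun t ht => ?_
    rw [interior_Icc] at ht
    rw [(hg t).deriv]
    exact mul_nonneg (hd t (Ioo_subset_Icc_self ht)) (exp_nonneg _)
  intro t ht
  have hgt : 0 ≤ g t :=
    (mul_nonneg ha (exp_nonneg _)).trans (hg_mono (left_mem_Icc.2 (ht.1.trans ht.2)) ht ht.1)
  exact nonneg_of_mul_nonneg_left hgt (exp_pos _)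

theorem recursive_ecbf_comparison_general
    (r : ℕ) (T : ℝ) (p : ℕ → ℝ)
    (ν : ℕ → ℝ → ℝ)
    (hdiff : ∀ i < r, Differentiable ℝ (ν i))
    (hrec : ∀ i < r, ∀ t : ℝ, ν (i + 1) t = deriv (ν i) t - p (i + 1) * ν i t)
    (hinit : ∀ i < r, ν i 0 ≥ 0)
    (hfin : ∀ t ∈ Set.Icc (0 : ℝ) T, ν r t ≥ 0) :
    (∀ i < r, ∀ t ∈ Set.Icc (0 : ℝ) T, ν i t ≥ 0) ∧
    (∀ t ∈ Set.Icc (0 : ℝ) T, ν 0 t ≥ 0) := by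
  have hnonneg : ∀ i ≤ r, ∀ t ∈ Icc (0 : ℝ) T, ν i t ≥ 0 := by
    intro k hk
    induction hk using Nat.decreasingInduction with
    | self => exact hfin
    | of_succ i hi ih =>
      exact nonneg_of_deriv_sub_mul_nonneg (p := p (i + 1)) (hdiff i hi) (hinit i hi)
        fun t ht => hrec i hi t ▸ ih t ht
  exact ⟨fun i hi => hnonneg i hi.le, hnonneg 0 r.zero_le⟩

/-- Recursive comparison argument for exponential CBFs: with `ν 0 = ν₀` `r`-times
differentiable and `ν (i+1) = ν i' - p (i+1) • ν i`, if `ν i 0 ≥ 0` for `i < r` and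
`ν r t ≥ 0` on `[0, T]`, then `ν i t ≥ 0` for all `i < r` and `t ∈ [0, T]`;
in particular `ν 0 t ≥ 0`. -/
theorem recursive_ecbf_comparison
    (r : ℕ) (hr : 1 ≤ r) (T : ℝ) (hT : 0 ≤ T) (p : ℕ → ℝ)
    (ν : ℕ → ℝ → ℝ)
    (hdiff : ∀ i < r, Differentiable ℝ (ν i))
    (hrec : ∀ i < r, ∀ t : ℝ, ν (i + 1) t = deriv (ν i) t - p (i + 1) * ν i t)
    (hinit : ∀ i < r, ν i 0 ≥ 0)
    (hfin : ∀ t ∈ Set.Icc (0 : ℝ) T, ν r t ≥ 0) :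
    (∀ i < r, ∀ t ∈ Set.Icc (0 : ℝ) T, ν i t ≥ 0) ∧
    (∀ t ∈ Set.Icc (0 : ℝ) T, ν 0 t ≥ 0) :=
  recursive_ecbf_comparison_general r T p ν hdiff hrec hinit hfin
end
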